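/- Let M be a C*-algebra and I₁, …, I_n closed two-sided ideals with M = I₁ + ⋯ + I_n. Then the positive cone of M equals the sum of the positive cones: M⁺ = I₁⁺ + ⋯ + I_n⁺. -/

import Mathlib

/-!
Write `1 = ∑ eₖ` with `eₖ ∈ Iₖ` and put `s = ∑ eₖ⋆ eₖ`. Expanding `∑ (1 - n eₖ)⋆ (1 - n eₖ) ≥ 0`
gives `n ≤ n² s`, so `s` is invertible. For `m ≥ 0` and `w = s^(-1/2) √m` we then get
`m = w⋆ s w = ∑ (eₖ w)⋆ (eₖ w)`, and `(eₖ w)⋆ (eₖ w)` is a positive element of `Iₖ`.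
-/

open CFC

theorem natCast_le_card_sq_smul_sum_star_mul_self {R ι : Type*} [Ring R] [StarRing R]
    [PartialOrder R] [StarOrderedRing R] [Fintype ι] {e : ι → R} (he : ∑ i, e i = 1) :
    (Fintype.card ι : R) ≤ Fintype.card ι ^ 2 • ∑ i, star (e i) * e i := by
  set N := Fintype.card ι
  have hexpand : ∀ i, star (1 - N • e i) * (1 - N • e i)
      = 1 - N • e i - N • star (e i) + N ^ 2 • (star (e i) * e i) := by
    intro i
    rw [star_sub, star_one, star_nsmul]
    simp only [sub_mul, mul_sub, one_mul, mul_one, smul_mul_smul_comm, sq]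
    abel
  have hsum : ∑ i, star (1 - N • e i) * (1 - N • e i)
      = N ^ 2 • ∑ i, star (e i) * e i - N := by
    simp only [hexpand, Finset.sum_add_distrib, Finset.sum_sub_distrib, ← Finset.smul_sum, he,
      ← star_sum, star_one, Finset.sum_const, Finset.card_univ, nsmul_one]
    abel
  rw [← sub_nonneg, ← hsum]
  exact Finset.sum_nonneg fun i _ ↦ star_mul_self_nonneg _

section CStarAlgebra

variable {A ι : Type*} [CStarAlgebra A] [PartialOrder A] [StarOrderedRing A] [Fintype ι]
  {e : ι → A}

theorem isUnit_sum_star_mul_self_of_sum_eq_one (he : ∑ i, e i = 1) :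
    IsUnit (∑ i, star (e i) * e i) := by
  nontriviality A
  have hcard : 0 < Fintype.card ι := by
    rw [Fintype.card_pos_iff]
    by_contra hempty
    rw [not_nonempty_iff] at hempty
    simp at he
  have hN : IsStrictlyPositive (Fintype.card ι : A) := by
    simpa using isStrictlyPositive_algebraMap (A := A) (Nat.cast_pos.mpr hcard : (0 : ℝ) < _)
  have hunit := CStarAlgebra.isUnit_of_le _ (natCast_le_card_sq_smul_sum_star_mul_self he) hN
  rwa [nsmul_eq_mul, Nat.cast_pow, IsUnit.mul_left_iff (hN.isUnit.pow 2)] at hunit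

theorem exists_eq_sum_star_mul_self_of_sum_eq_one (he : ∑ i, e i = 1) {m : A} (hm : 0 ≤ m) :
    ∃ w : A, m = ∑ i, star (e i * w) * (e i * w) := by
  set s := ∑ i, star (e i) * e i
  have hs : IsStrictlyPositive s := (isUnit_sum_star_mul_self_of_sum_eq_one he).isStrictlyPositive
    (Finset.sum_nonneg fun i _ ↦ star_mul_self_nonneg _)
  set b := s ^ (-(1 / 2) : ℝ)
  have hb : 0 ≤ b := rpow_nonneg
  refine ⟨b * sqrt m, ?_⟩
  calc m = sqrt m * (b * s * b) * sqrt m := by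
        rw [conjugate_rpow_neg_one_half s hs, mul_one, sqrt_mul_sqrt_self m hm]
    _ = star (b * sqrt m) * s * (b * sqrt m) := by
        rw [star_mul, (IsSelfAdjoint.of_nonneg (sqrt_nonneg m)).star_eq,
          (IsSelfAdjoint.of_nonneg hb).star_eq]
        simp only [mul_assoc]
    _ = ∑ i, star (e i * (b * sqrt m)) * (e i * (b * sqrt m)) := by
        simp only [s, Finset.mul_sum, Finset.sum_mul, star_mul, mul_assoc]

end CStarAlgebra

theorem positive_cone_sum_of_ideals_general
    {M : Type*} [CStarAlgebra M] [PartialOrder M] [StarOrderedRing M]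
    (n : ℕ) (I : Fin n → TwoSidedIdeal M)
    (hspan : ∀ m : M, ∃ f : Fin n → M, (∀ k, f k ∈ I k) ∧ m = ∑ k, f k) :
    ∀ m : M, 0 ≤ m ↔
      ∃ f : Fin n → M, (∀ k, f k ∈ I k ∧ 0 ≤ f k) ∧ m = ∑ k, f k := by
  intro m
  refine ⟨fun hm ↦ ?_, ?_⟩
  · obtain ⟨e, he, hsum⟩ := hspan 1
    obtain ⟨w, rfl⟩ := exists_eq_sum_star_mul_self_of_sum_eq_one hsum.symm hm
    exact ⟨fun k ↦ star (e k * w) * (e k * w),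
      fun k ↦ ⟨(I k).mul_mem_left _ _ ((I k).mul_mem_right _ _ (he k)), star_mul_self_nonneg _⟩,
      rfl⟩
  · rintro ⟨f, hf, rfl⟩
    exact Finset.sum_nonneg fun k _ ↦ (hf k).2

/-- Let `M` be a C*-algebra and `I₁, …, I_n` closed two-sided ideals with
`M = I₁ + ⋯ + I_n`.  Then the positive cone of `M` equals the sum of the
positive cones: `M⁺ = I₁⁺ + ⋯ + I_n⁺`. -/
theorem positive_cone_sum_of_ideals
    {M : Type*} [CStarAlgebra M] [PartialOrder M] [StarOrderedRing M]
    (n : ℕ) (I : Fin n → TwoSidedIdeal M)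
    (hclosed : ∀ k, IsClosed (I k : Set M))
    (hstar : ∀ k, ∀ x ∈ I k, star x ∈ I k)
    (hspan : ∀ m : M, ∃ f : Fin n → M, (∀ k, f k ∈ I k) ∧ m = ∑ k, f k) :
    ∀ m : M, 0 ≤ m ↔
      ∃ f : Fin n → M, (∀ k, f k ∈ I k ∧ 0 ≤ f k) ∧ m = ∑ k, f k :=
  positive_cone_sum_of_ideals_general n I hspan
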